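/- For any subset M = {m_1 < ... < m_t} ⊆ [n-1], the generating function ∑ q^{maj(π)} over all π ∈ S_n with Des(π⁻¹) ⊆ M equals the q-multinomial coefficient [n choose m_1-m_0, m_2-m_1, ..., m_{t+1}-m_t]_q, where m_0 = 0 and m_{t+1} = n. -/

import Mathlib

open Finset

noncomputable section

/-- The `q`-analogue `[m]_q = 1 + q + ... + q^(m-1)`. -/
def qInt {F : Type} [Field F] (q : F) (m : ℕ) : F := ∑ i ∈ Finset.range m, q ^ i

/-- The `q`-factorial `[m]_q! = [1]_q [2]_q ⋯ [m]_q`. -/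
def qFact {F : Type} [Field F] (q : F) (m : ℕ) : F := ∏ i ∈ Finset.range m, qInt q (i + 1)

/-- Number of inversions of the word `w 0, w 1, ..., w (N-1)`. -/
def wInv (N : ℕ) (w : ℕ → ℤ) : ℕ :=
  ((Finset.range N ×ˢ Finset.range N).filter fun p => p.1 < p.2 ∧ w p.2 < w p.1).card

/-- Descent set (1-indexed) of the word `w 0, ..., w (N-1)`:
`i ∈ [N-1]` is a descent if the i-th letter exceeds the (i+1)-st letter. -/
def wDes (N : ℕ) (w : ℕ → ℤ) : Finset ℕ :=
  (Finset.Ico 1 N).filter fun i => w i < w (i - 1)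

/-- Major index of a word: sum of its descents. -/
def wMaj (N : ℕ) (w : ℕ → ℤ) : ℕ := ∑ i ∈ wDes N w, i

/-- Number of negative letters of a word. -/
def wNeg (N : ℕ) (w : ℕ → ℤ) : ℕ := ((Finset.range N).filter fun i => w i < 0).card

/-- The word `(π(1), ..., π(n))` of a permutation of `[n]`, with values in `[n] ⊆ ℤ`. -/
def sword (n : ℕ) (π : Equiv.Perm (Fin n)) (i : ℕ) : ℤ :=
  if h : i < n then ((π ⟨i, h⟩ : ℕ) : ℤ) + 1 else 0

def sInv (n : ℕ) (π : Equiv.Perm (Fin n)) : ℕ := wInv n (sword n π)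
def sDes (n : ℕ) (π : Equiv.Perm (Fin n)) : Finset ℕ := wDes n (sword n π)
def sMaj (n : ℕ) (π : Equiv.Perm (Fin n)) : ℕ := wMaj n (sword n π)
def sDesNum (n : ℕ) (π : Equiv.Perm (Fin n)) : ℕ := (sDes n π).card

/-- A signed permutation of `[n]`: a permutation `σ` of `ℤ` with `σ(-a) = -σ(a)`
which fixes every integer of absolute value greater than `n`. -/
def IsSigned (n : ℕ) (σ : Equiv.Perm ℤ) : Prop :=
  (∀ a : ℤ, σ (-a) = -σ a) ∧ ∀ a : ℤ, (n : ℤ) < |a| → σ a = a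

abbrev SignedPerm (n : ℕ) := {σ : Equiv.Perm ℤ // IsSigned n σ}

theorem IsSigned.map_zero {n : ℕ} {σ : Equiv.Perm ℤ} (h : IsSigned n σ) : σ 0 = 0 := by
  have h1 := h.1 0
  simp only [neg_zero] at h1
  omega

theorem IsSigned.abs_apply_le {n : ℕ} {σ : Equiv.Perm ℤ} (h : IsSigned n σ) {a : ℤ}
    (ha : |a| ≤ n) : |σ a| ≤ n := by
  by_contra hc
  push_neg at hc
  have h2 : σ (σ a) = σ a := h.2 (σ a) hc
  have h3 : σ a = a := σ.injective h2
  rw [h3] at hc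
  omega

theorem IsSigned.ext {n : ℕ} {σ τ : Equiv.Perm ℤ} (hσ : IsSigned n σ) (hτ : IsSigned n τ)
    (h : ∀ a : ℤ, 1 ≤ a → a ≤ n → σ a = τ a) : σ = τ := by
  apply Equiv.ext
  intro a
  rcases lt_trichotomy a 0 with h1 | h1 | h1
  · by_cases h2 : -(n : ℤ) ≤ a
    · have key := h (-a) (by omega) (by omega)
      have e1 := hσ.1 (-a)
      have e2 := hτ.1 (-a)
      rw [neg_neg] at e1 e2
      rw [e1, e2, key]
    · have habs : (n : ℤ) < |a| := by rw [abs_of_neg h1]; omega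
      rw [hσ.2 a habs, hτ.2 a habs]
  · rw [h1, hσ.map_zero, hτ.map_zero]
  · by_cases h2 : a ≤ n
    · exact h a (by omega) h2
    · have habs : (n : ℤ) < |a| := by rw [abs_of_pos h1]; omega
      rw [hσ.2 a habs, hτ.2 a habs]

noncomputable instance (n : ℕ) : Fintype (SignedPerm n) := by
  have key : ∀ (σ : SignedPerm n) (i : Fin n),
      σ.1 ((i : ℕ) + 1 : ℤ) ∈ Finset.Icc (-(n : ℤ)) (n : ℤ) := by
    intro σ i
    have hi : |((i : ℕ) + 1 : ℤ)| ≤ n := by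
      have := i.2
      rw [abs_of_pos (by omega)]
      omega
    have hb := abs_le.mp (σ.2.abs_apply_le hi)
    rw [Finset.mem_Icc]
    exact hb
  exact Fintype.ofInjective
    (fun σ : SignedPerm n =>
      (fun i : Fin n => (⟨σ.1 ((i : ℕ) + 1 : ℤ), key σ i⟩ :
        {x : ℤ // x ∈ Finset.Icc (-(n : ℤ)) (n : ℤ)})))
    (by
      intro σ τ hfun
      apply Subtype.ext
      apply IsSigned.ext σ.2 τ.2
      intro a ha1 ha2
      have hfin : (a - 1).toNat < n := by omega
      have h2 := congrFun hfun ⟨(a - 1).toNat, hfin⟩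
      rw [Subtype.ext_iff] at h2
      have h3 : (((a - 1).toNat : ℕ) : ℤ) + 1 = a := by omega
      have h2' : σ.1 ((((a - 1).toNat : ℕ) : ℤ) + 1) = τ.1 ((((a - 1).toNat : ℕ) : ℤ) + 1) := h2
      rw [h3] at h2'
      exact h2')

/-- The word `(σ(1), ..., σ(n))` of a signed permutation. -/
def bword (n : ℕ) (σ : Equiv.Perm ℤ) (i : ℕ) : ℤ := σ ((i : ℤ) + 1)

/-- The type-B descent set `Des_B(σ) = {i ∈ [0, n-1] : σ(i) > σ(i+1)}`, with `σ(0) := 0`. -/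
def DesB (n : ℕ) (σ : Equiv.Perm ℤ) : Finset ℕ :=
  (Finset.range n).filter fun i => σ ((i : ℤ) + 1) < (if i = 0 then 0 else σ (i : ℤ))

def bNeg (n : ℕ) (σ : Equiv.Perm ℤ) : ℕ := wNeg n (bword n σ)
def bMaj (n : ℕ) (σ : Equiv.Perm ℤ) : ℕ := wMaj n (bword n σ)

/-- The flag major index `fmaj(σ) = 2 maj(σ(1),...,σ(n)) + neg(σ)`, where the major index is
taken with respect to the order `-n < ... < -1 < 1 < ... < n` (the usual order of `ℤ`). -/
def bFmaj (n : ℕ) (σ : Equiv.Perm ℤ) : ℕ := 2 * bMaj n σ + bNeg n σ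

def bInv (n : ℕ) (σ : Equiv.Perm ℤ) : ℕ := wInv n (bword n σ)

/-- The Coxeter generator `s_i` of `B_n` as a permutation of `ℤ` (for `0 ≤ i ≤ n-1`). -/
def bGen (i : ℕ) : Equiv.Perm ℤ :=
  if i = 0 then Equiv.swap 1 (-1)
  else Equiv.swap (i : ℤ) ((i : ℤ) + 1) * Equiv.swap (-(i : ℤ)) (-((i : ℤ) + 1))

/-- Length of `σ` with respect to a generating set `G`: the minimal length of a word
in the generators expressing `σ`. -/
def coxLen (G : Set (Equiv.Perm ℤ)) (σ : Equiv.Perm ℤ) : ℕ :=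
  sInf {r | ∃ l : List (Equiv.Perm ℤ), l.length = r ∧ (∀ g ∈ l, g ∈ G) ∧ l.prod = σ}

def BGens (n : ℕ) : Set (Equiv.Perm ℤ) := {g | ∃ i < n, g = bGen i}

/-- The Coxeter length on the hyperoctahedral group `B_n`. -/
def lenB (n : ℕ) (σ : Equiv.Perm ℤ) : ℕ := coxLen (BGens n) σ

/-- Coxeter generators of `D_n`: `s_0^D` maps `1 ↦ -2, 2 ↦ -1`, together with `s_1, ..., s_{n-1}`. -/
def DGens (n : ℕ) : Set (Equiv.Perm ℤ) :=
  {g | g = Equiv.swap 1 (-2) * Equiv.swap (-1) 2 ∨ ∃ i, 1 ≤ i ∧ i < n ∧ g = bGen i}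

/-- The Coxeter length on the Weyl group `D_n`. -/
def lenD (n : ℕ) (σ : Equiv.Perm ℤ) : ℕ := coxLen (DGens n) σ

/-- The flag major index of type `D`: `fmaj_D(σ) = fmaj(σ(1),...,σ(n-1),|σ(n)|)`. -/
def fmajD (n : ℕ) (σ : Equiv.Perm ℤ) : ℕ :=
  2 * wMaj n (fun i => if i = n - 1 then |σ ((i : ℤ) + 1)| else σ ((i : ℤ) + 1))
    + wNeg n (fun i => if i = n - 1 then |σ ((i : ℤ) + 1)| else σ ((i : ℤ) + 1))

/-- `S` is a shuffle of the pairwise disjoint sequences in `L`: each sequence of `L` appears in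
`S` in its original order, and `S` is, as a set, the disjoint union of the sequences of `L`. -/
def IsShuffle {α : Type} (S : List α) (L : List (List α)) : Prop :=
  (∀ l ∈ L, l.Sublist S) ∧ (∀ x, x ∈ S ↔ ∃ l ∈ L, x ∈ l) ∧
    S.length = (L.map List.length).sum

/-- The coefficient `α_i(M)` of Theorems 4.2 and 4.4, for `M = {m 1 < ... < m t}`,
`m 0 = 0`, `m (t+1) = n`. The three cases are mutually exclusive, so the sum of the
indicator terms agrees with the case-by-case definition. -/
def alphaB {F : Type} [Field F] (q : F) (t : ℕ) (m : ℕ → ℕ) (i : ℤ) : F :=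
  (if 0 < m 1 ∧ i = (m 1 : ℤ) then q ^ ((m 1 : ℕ) : ℤ) - q ^ (-((m 1 : ℕ) : ℤ)) else 0)
  + ∑ s ∈ Finset.Icc 1 t,
      ((if i = (m (s + 1) : ℤ) then q ^ (-((m s : ℕ) : ℤ)) - q ^ (-((m (s + 1) : ℕ) : ℤ)) else 0)
        + (if i = -((m s : ℤ) + 1) then q ^ ((m (s + 1) : ℕ) : ℤ) - q ^ ((m s : ℕ) : ℤ) else 0))

end

/-!
Write `b(v)` for the index of the block `[m_s, m_{s+1})` containing `v`. The condition
`Des(π⁻¹) ⊆ M` says exactly that `π⁻¹` is increasing on each block, so `π` is recovered from the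
word `b(π(1)) ⋯ b(π(n))` by standardization, and every word with `m_{s+1} - m_s` letters `s`
arises. Since `b` is monotone and `π` is increasing on positions carrying equal letters, `π` and
its word have the same descents, hence the same major index. This reduces the theorem to
MacMahon's formula for words of content `μ`, proved in the denominator-free form
`(∑ q^maj) · ∏ [μ_c]_q! = [N]_q!` by induction on the length, refined by a letter `b` appended
at the end: it creates a descent exactly when the previous letter exceeds `b`, and the words
followed by `b` contribute `q^(#letters above b) · [N]_q!`.
-/

theorem card_filter_comp_equiv {α β : Type*} [Fintype α] [Fintype β] (e : α ≃ β) (p : β → Prop)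
    [DecidablePred p] : #{a | p (e a)} = #{b | p b} := by
  simp only [Finset.card_filter]
  exact e.sum_comp fun b => if p b then 1 else 0

theorem Fin.card_filter_le_val_lt {n a b : ℕ} (hb : b ≤ n) :
    #{v : Fin n | a ≤ v ∧ v < b} = b - a := by
  rw [Finset.card_filter, Fin.sum_univ_eq_sum_range (fun v => if a ≤ v ∧ v < b then 1 else 0),
    ← Finset.card_filter, ← Nat.card_Ico]
  congr 1
  ext v
  simp only [Finset.mem_filter, Finset.mem_range, Finset.mem_Ico]
  omega

theorem single_one_le {α : Type*} [DecidableEq α] {μ : α → ℕ} {b : α} (hb : μ b ≠ 0) :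
    Pi.single b 1 ≤ μ := fun c => by
  rcases eq_or_ne c b with rfl | hc
  · simpa [Nat.one_le_iff_ne_zero] using hb
  · simp [hc]

theorem sum_tsub_single_one {α : Type*} [Fintype α] [DecidableEq α] {μ : α → ℕ} {b : α}
    (hb : μ b ≠ 0) : ∑ c, (μ - Pi.single b 1 : α → ℕ) c = ∑ c, μ c - 1 := by
  simp only [Pi.sub_apply]
  rw [Finset.sum_tsub_distrib _ fun c _ => single_one_le hb c, Finset.sum_pi_single']
  simp

section QAnalogues

variable {F : Type} [Field F]

theorem qInt_add (q : F) (a b : ℕ) : qInt q (a + b) = qInt q a + q ^ a * qInt q b := by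
  simp only [qInt, Finset.sum_range_add, Finset.mul_sum, pow_add]

theorem qFact_succ (q : F) (N : ℕ) : qFact q (N + 1) = qFact q N * qInt q (N + 1) :=
  Finset.prod_range_succ _ _

theorem prod_qFact_eq_qInt_mul {α : Type*} [Fintype α] [DecidableEq α] (q : F) {μ : α → ℕ}
    {b : α} (hb : μ b ≠ 0) :
    ∏ c, qFact q (μ c) = qInt q (μ b) * ∏ c, qFact q ((μ - Pi.single b 1 : α → ℕ) c) := by
  obtain ⟨k, hk⟩ := Nat.exists_eq_succ_of_ne_zero hb
  have hrest : ∀ c ∈ ({b}ᶜ : Finset α), (μ - Pi.single b 1 : α → ℕ) c = μ c := fun c hc => by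
    simp [Finset.notMem_singleton.mp (Finset.mem_compl.mp hc)]
  rw [Fintype.prod_eq_mul_prod_compl b, Fintype.prod_eq_mul_prod_compl b (fun c => qFact q _),
    Finset.prod_congr rfl fun c hc => congrArg (qFact q) (hrest c hc)]
  simp only [Pi.sub_apply, Pi.single_eq_same, hk, Nat.succ_sub_one, qFact_succ]
  ring

theorem qInt_sum {α : Type*} [LinearOrder α] (q : F) (μ : α → ℕ) (s : Finset α) :
    qInt q (∑ c ∈ s, μ c) = ∑ c ∈ s, q ^ (∑ d ∈ s with c < d, μ d) * qInt q (μ c) := by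
  induction s using Finset.induction_on_max with
  | empty => simp [qInt]
  | insert a s ha ih =>
    have ha' : a ∉ s := fun h => lt_irrefl a (ha a h)
    have hfilter_a : ({d ∈ insert a s | a < d} : Finset α) = ∅ :=
      Finset.filter_eq_empty_iff.mpr fun d hd had => by
        rcases Finset.mem_insert.mp hd with rfl | hd
        · exact lt_irrefl d had
        · exact lt_asymm had (ha d hd)
    have hfilter : ∀ c ∈ s, ({d ∈ insert a s | c < d} : Finset α) = insert a {d ∈ s | c < d} :=
      fun c hc => by rw [Finset.filter_insert, if_pos (ha c hc)]
    rw [Finset.sum_insert ha', Finset.sum_insert ha', hfilter_a, Finset.sum_empty, pow_zero,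
      one_mul, qInt_add, ih, Finset.mul_sum]
    congr 1
    refine Finset.sum_congr rfl fun c hc => ?_
    rw [hfilter c hc, Finset.sum_insert (by simp [ha']), pow_add]
    ring

def countAbove {α : Type*} [Fintype α] [LinearOrder α] (μ : α → ℕ) (b : α) : ℕ :=
  ∑ c with b < c, μ c

theorem countAbove_tsub_single_self {α : Type*} [Fintype α] [LinearOrder α] (μ : α → ℕ) (b : α) :
    countAbove (μ - Pi.single b 1) b = countAbove μ b :=
  Finset.sum_congr rfl fun c hc => by
    simp [(Finset.mem_filter.mp hc).2.ne']

theorem sum_pow_countAbove_add_mul_qInt {α : Type*} [Fintype α] [LinearOrder α] (q : F)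
    (μ : α → ℕ) (b : α) :
    ∑ c, q ^ (countAbove μ c + if b < c then ∑ d, μ d else 0) * qInt q (μ c)
      = q ^ countAbove μ b * qInt q (∑ c, μ c) := by
  set A := countAbove μ b
  set B := ∑ c with ¬ b < c, μ c
  have hsplit : ∑ c, μ c = B + A := (Finset.sum_filter_not_add_sum_filter _ _ _).symm
  have hlow : ∀ c ∈ (univ.filter fun c => ¬ b < c),
      countAbove μ c = (∑ d ∈ univ.filter (fun c => ¬ b < c) with c < d, μ d) + A := fun c hc => by
    have hcb : c ≤ b := not_lt.mp (Finset.mem_filter.mp hc).2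
    rw [countAbove, ← Finset.sum_filter_not_add_sum_filter _ (fun d => b < d), Finset.filter_filter,
      Finset.filter_filter, Finset.filter_filter]
    congr 2
    · ext d
      simp only [Finset.mem_filter, Finset.mem_univ, true_and, and_comm]
    · ext d
      simp only [Finset.mem_filter, Finset.mem_univ, true_and]
      exact ⟨And.right, fun h => ⟨hcb.trans_lt h, h⟩⟩
  have hhigh : ∀ c ∈ (univ.filter fun c => b < c),
      countAbove μ c = ∑ d ∈ univ.filter (fun c => b < c) with c < d, μ d := fun c hc => by
    rw [Finset.mem_filter] at hc
    rw [countAbove, Finset.filter_filter]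
    congr 1
    ext d
    simp only [Finset.mem_filter, Finset.mem_univ, true_and]
    exact ⟨fun h => ⟨hc.2.trans h, h⟩, fun h => h.2⟩
  have hlow_sum :
      ∑ c with ¬ b < c, q ^ (countAbove μ c + if b < c then ∑ d, μ d else 0) * qInt q (μ c)
        = q ^ A * qInt q B := by
    rw [qInt_sum, Finset.mul_sum]
    refine Finset.sum_congr rfl fun c hc => ?_
    rw [if_neg (Finset.mem_filter.mp hc).2, add_zero, hlow c hc, pow_add]
    ring
  have hhigh_sum :
      ∑ c with b < c, q ^ (countAbove μ c + if b < c then ∑ d, μ d else 0) * qInt q (μ c)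
        = q ^ (B + A) * qInt q A := by
    rw [show qInt q A = qInt q (∑ c with b < c, μ c) from rfl, qInt_sum, Finset.mul_sum]
    refine Finset.sum_congr rfl fun c hc => ?_
    rw [if_pos (Finset.mem_filter.mp hc).2, hhigh c hc, hsplit, pow_add]
    ring
  rw [← Finset.sum_filter_not_add_sum_filter _ (fun c => b < c), hlow_sum, hhigh_sum, hsplit,
    qInt_add q B A, pow_add]
  ring

theorem qInt_X_ne_zero {K : Type} [Field K] {k : ℕ} (hk : k ≠ 0) :
    qInt (RatFunc.X : RatFunc K) k ≠ 0 := by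
  have h : qInt (RatFunc.X : RatFunc K) k
      = algebraMap (Polynomial K) (RatFunc K) (∑ i ∈ Finset.range k, Polynomial.X ^ i) := by
    simp [qInt, RatFunc.algebraMap_X]
  rw [h]
  refine RatFunc.algebraMap_ne_zero fun h0 => ?_
  have := congrArg (Polynomial.eval 0) h0
  simp [Polynomial.eval_finsetSum, hk] at this

theorem qFact_X_ne_zero {K : Type} [Field K] (k : ℕ) : qFact (RatFunc.X : RatFunc K) k ≠ 0 :=
  Finset.prod_ne_zero_iff.mpr fun i _ => qInt_X_ne_zero (Nat.succ_ne_zero i)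

end QAnalogues

section Words

variable {F : Type} [Field F] {L N : ℕ}

theorem wDes_congr {u v : ℕ → ℤ}
    (h : ∀ i, 1 ≤ i → i < N → (u i < u (i - 1) ↔ v i < v (i - 1))) : wDes N u = wDes N v :=
  Finset.filter_congr fun i hi => h i (Finset.mem_Ico.mp hi).1 (Finset.mem_Ico.mp hi).2

theorem wMaj_succ (u : ℕ → ℤ) :
    wMaj (N + 1) u = wMaj N u + if u N < u (N - 1) then N else 0 := by
  rcases Nat.eq_zero_or_pos N with rfl | hN
  · simp [wMaj, wDes]
  rw [wMaj, wMaj, wDes, wDes, Nat.Ico_succ_right_eq_insert_Ico hN, Finset.filter_insert]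
  split_ifs with hd
  · rw [Finset.sum_insert (by simp), add_comm]
  · rw [add_zero]

def wordInt (w : Fin N → Fin L) (i : ℕ) : ℤ := if h : i < N then ((w ⟨i, h⟩ : ℕ) : ℤ) else 0

def wordMaj (w : Fin N → Fin L) : ℕ := wMaj N (wordInt w)

def letterCount (w : Fin N → Fin L) (c : Fin L) : ℕ := #{i | w i = c}

def wordsWithContent (N : ℕ) (ν : Fin L → ℕ) : Finset (Fin N → Fin L) := {w | letterCount w = ν}

theorem mem_wordsWithContent {ν : Fin L → ℕ} {w : Fin N → Fin L} :
    w ∈ wordsWithContent N ν ↔ letterCount w = ν := by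
  simp [wordsWithContent]

theorem letterCount_snoc (w : Fin N → Fin L) (b : Fin L) :
    letterCount (Fin.snoc w b : Fin (N + 1) → Fin L) = letterCount w + Pi.single b 1 := by
  funext c
  simp only [letterCount, Finset.card_filter, Fin.sum_univ_castSucc, Fin.snoc_castSucc,
    Fin.snoc_last, Pi.add_apply, Pi.single_apply, eq_comm]

theorem wordMaj_snoc (w : Fin (N + 1) → Fin L) (b : Fin L) :
    wordMaj (Fin.snoc w b : Fin (N + 2) → Fin L)
      = wordMaj w + if b < w (Fin.last N) then N + 1 else 0 := by
  have hprefix :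
      wDes (N + 1) (wordInt (Fin.snoc w b : Fin (N + 2) → Fin L)) = wDes (N + 1) (wordInt w) := by
    refine wDes_congr fun i _ hi => ?_
    have h1 : i < N + 2 := by omega
    have h2 : i - 1 < N + 2 := by omega
    have h3 : i - 1 < N + 1 := by omega
    simp only [wordInt, dif_pos h1, dif_pos h2, dif_pos hi, dif_pos h3]
    rw [show (⟨i, h1⟩ : Fin (N + 2)) = Fin.castSucc ⟨i, hi⟩ from rfl,
      show (⟨i - 1, h2⟩ : Fin (N + 2)) = Fin.castSucc ⟨i - 1, h3⟩ from rfl, Fin.snoc_castSucc,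
      Fin.snoc_castSucc]
  rw [wordMaj, wMaj_succ, wMaj, hprefix, ← wMaj, ← wordMaj]
  congr 1
  simp only [wordInt, Nat.add_sub_cancel, dif_pos (show N + 1 < N + 2 by omega),
    dif_pos (show N < N + 2 by omega)]
  rw [show (⟨N + 1, _⟩ : Fin (N + 2)) = Fin.last (N + 1) from rfl,
    show (⟨N, _⟩ : Fin (N + 2)) = Fin.castSucc (Fin.last N) from rfl, Fin.snoc_last,
    Fin.snoc_castSucc]
  simp only [Nat.cast_lt, Fin.val_fin_lt]

theorem sum_wordsWithContent_succ {M : Type*} [AddCommMonoid M] (μ : Fin L → ℕ)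
    (f : (Fin (N + 1) → Fin L) → M) :
    ∑ w ∈ wordsWithContent (N + 1) μ, f w
      = ∑ b with μ b ≠ 0, ∑ w ∈ wordsWithContent N (μ - Pi.single b 1), f (Fin.snoc w b) := by
  rw [Finset.sum_sigma']
  refine Finset.sum_bij' (fun w _ => ⟨w (Fin.last N), Fin.init w⟩) (fun x _ => Fin.snoc x.2 x.1)
    ?_ ?_ ?_ ?_ ?_
  · intro w hw
    have hcount := letterCount_snoc (Fin.init w) (w (Fin.last N))
    rw [Fin.snoc_init_self, mem_wordsWithContent.mp hw] at hcount
    simp only [Finset.mem_sigma, Finset.mem_filter, Finset.mem_univ, true_and, mem_wordsWithContent]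
    refine ⟨fun h => ?_, ?_⟩
    · have := congrFun hcount (w (Fin.last N))
      simp [h] at this
    · rw [hcount, add_tsub_cancel_right]
  · rintro ⟨b, w⟩ hw
    simp only [Finset.mem_sigma, Finset.mem_filter, Finset.mem_univ, true_and,
      mem_wordsWithContent] at hw ⊢
    rw [letterCount_snoc, hw.2, tsub_add_cancel_of_le (single_one_le hw.1)]
  · intro w _
    exact Fin.snoc_init_self w
  · rintro ⟨b, w⟩ _
    simp
  · intro w _
    simp

theorem sum_wordMaj_snoc_mul_prod_qFact (q : F) (μ : Fin L → ℕ) (b : Fin L) (hμ : ∑ c, μ c = N) :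
    (∑ w ∈ wordsWithContent N μ, q ^ wordMaj (Fin.snoc w b : Fin (N + 1) → Fin L))
        * ∏ c, qFact q (μ c)
      = q ^ countAbove μ b * qFact q N := by
  induction N generalizing μ b with
  | zero =>
    obtain rfl : μ = 0 := funext fun c => Finset.sum_eq_zero_iff.mp hμ c (Finset.mem_univ c)
    simp [wordsWithContent, letterCount, funext_iff, wordMaj, wMaj, wDes, countAbove, qFact]
  | succ N ih =>
    have hterm : ∀ b' ∈ (univ.filter fun b' => μ b' ≠ 0),
        (∑ w ∈ wordsWithContent N (μ - Pi.single b' 1),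
            q ^ wordMaj (Fin.snoc (Fin.snoc w b' : Fin (N + 1) → Fin L) b : Fin (N + 2) → Fin L))
          * ∏ c, qFact q (μ c)
        = qFact q N * (q ^ (countAbove μ b' + if b < b' then N + 1 else 0) * qInt q (μ b')) := by
      intro b' hb'
      have hb'0 := (Finset.mem_filter.mp hb').2
      have hsnoc : ∀ w : Fin N → Fin L,
          wordMaj (Fin.snoc (Fin.snoc w b' : Fin (N + 1) → Fin L) b : Fin (N + 2) → Fin L)
            = wordMaj (Fin.snoc w b' : Fin (N + 1) → Fin L) + if b < b' then N + 1 else 0 := by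
        intro w
        rw [wordMaj_snoc, Fin.snoc_last]
      simp only [hsnoc, pow_add, ← Finset.sum_mul]
      rw [prod_qFact_eq_qInt_mul q hb'0, mul_comm (qInt q _), ← mul_assoc, mul_right_comm _ (q ^ _),
        ih _ b' (by rw [sum_tsub_single_one hb'0, hμ]; rfl), countAbove_tsub_single_self]
      ring
    rw [sum_wordsWithContent_succ, Finset.sum_mul, Finset.sum_congr rfl hterm, ← Finset.mul_sum,
      Finset.sum_filter_of_ne (p := fun c => μ c ≠ 0) fun c _ h hc => h (by simp [hc, qInt]),
      ← hμ, sum_pow_countAbove_add_mul_qInt, hμ, qFact_succ]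
    ring

theorem wordMaj_snoc_last (w : Fin N → Fin (L + 1)) :
    wordMaj (Fin.snoc w (Fin.last L) : Fin (N + 1) → Fin (L + 1)) = wordMaj w := by
  rcases N with _ | N
  · simp [wordMaj, wMaj, wDes]
  · rw [wordMaj_snoc, if_neg (not_lt.mpr (Fin.le_last _)), add_zero]

theorem sum_wordMaj_mul_prod_qFact (q : F) (ν : Fin L → ℕ) (hν : ∑ c, ν c = N) :
    (∑ w ∈ wordsWithContent N ν, q ^ wordMaj w) * ∏ c, qFact q (ν c) = qFact q N := by
  rcases L with _ | L
  · subst hν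
    simp [wordsWithContent, letterCount, funext_iff, wordMaj, wMaj, wDes, qFact]
  · have htop : countAbove ν (Fin.last L) = 0 :=
      Finset.sum_eq_zero fun c hc => absurd (Finset.mem_filter.mp hc).2 (not_lt.mpr (Fin.le_last c))
    simpa only [wordMaj_snoc_last, htop, pow_zero, one_mul] using
      sum_wordMaj_snoc_mul_prod_qFact q ν (Fin.last L) hν

end Words

section Rank

variable {n : ℕ} {α : Type*} [DecidableEq α]

def rank (w : Fin n → α) (i : Fin n) : ℕ := #{j | j < i ∧ w j = w i}

theorem rank_lt_rank {w : Fin n → α} {i j : Fin n} (hij : i < j) (h : w i = w j) :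
    rank w i < rank w j := by
  have hsub : univ.filter (fun k => k < i ∧ w k = w i)
      ⊆ univ.filter (fun k => k < j ∧ w k = w j) := fun k hk => by
    simp only [Finset.mem_filter, Finset.mem_univ, true_and] at hk ⊢
    exact ⟨hk.1.trans hij, hk.2.trans h⟩
  refine Finset.card_lt_card ((Finset.ssubset_iff_of_subset hsub).mpr ⟨i, ?_, ?_⟩) <;> simp [hij, h]

theorem rank_lt_rank_iff {w : Fin n → α} {i j : Fin n} (h : w i = w j) :
    rank w i < rank w j ↔ i < j := by
  refine ⟨fun hr => lt_of_not_ge fun hji => ?_, fun hij => rank_lt_rank hij h⟩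
  rcases hji.lt_or_eq with hlt | rfl
  · exact lt_asymm hr (rank_lt_rank hlt h.symm)
  · exact lt_irrefl _ hr

theorem rank_lt_letterCount {L : ℕ} (w : Fin n → Fin L) (i : Fin n) :
    rank w i < letterCount w (w i) := by
  refine Finset.card_lt_card ((Finset.ssubset_iff_of_subset fun k hk => ?_).mpr ⟨i, ?_, ?_⟩)
  · simp only [Finset.mem_filter, Finset.mem_univ, true_and] at hk ⊢
    exact hk.2
  · simp
  · simp

end Rank

section Blocks

variable {t n : ℕ} {m : ℕ → ℕ}

/-- The index `s` of the segment `[m s, m (s + 1))` that contains `v`. -/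
def block (t : ℕ) (m : ℕ → ℕ) (v : ℕ) : ℕ := #{s ∈ range (t + 1) | m (s + 1) ≤ v}

theorem block_mono : Monotone (block t m) := fun _ _ huv =>
  Finset.card_le_card (Finset.monotone_filter_right _ fun _ _ hs => hs.trans huv)

theorem block_lt (hlast : m (t + 1) = n) {v : ℕ} (hv : v < n) : block t m v < t + 1 := by
  calc block t m v ≤ #(range t) := Finset.card_le_card fun s hs => by
        rw [Finset.mem_filter, Finset.mem_range] at hs
        rcases (Nat.lt_succ_iff.mp hs.1).lt_or_eq with h | rfl
        · exact Finset.mem_range.mpr h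
        · omega
    _ < t + 1 := by simp

theorem block_eq (hm : StrictMonoOn m (Set.Iic (t + 1))) {s v : ℕ} (hs : s ≤ t) (h1 : m s ≤ v)
    (h2 : v < m (s + 1)) : block t m v = s := by
  rw [block, ← Finset.card_range s]
  congr 1
  ext s'
  simp only [Finset.mem_filter, Finset.mem_range]
  constructor
  · rintro ⟨hs', hle⟩
    by_contra h
    have := hm.monotoneOn (Set.mem_Iic.mpr (by omega)) (Set.mem_Iic.mpr (by omega))
      (show s + 1 ≤ s' + 1 by omega)
    omega
  · intro h
    exact ⟨by omega,
      (hm.monotoneOn (Set.mem_Iic.mpr (by omega)) (Set.mem_Iic.mpr (by omega)) h).trans h1⟩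

theorem exists_block (h0 : m 0 = 0) (hlast : m (t + 1) = n) {v : ℕ} (hv : v < n) :
    ∃ s ≤ t, m s ≤ v ∧ v < m (s + 1) := by
  classical
  have hex : ∃ s, v < m (s + 1) := ⟨t, hlast ▸ hv⟩
  refine ⟨Nat.find hex, Nat.find_min' hex (hlast ▸ hv), ?_, Nat.find_spec hex⟩
  rcases h : Nat.find hex with _ | s
  · exact h0.le.trans (Nat.zero_le v)
  · exact not_lt.mp (Nat.find_min hex (h ▸ Nat.lt_succ_self s))

theorem block_eq_iff (h0 : m 0 = 0) (hlast : m (t + 1) = n) (hm : StrictMonoOn m (Set.Iic (t + 1)))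
    {s v : ℕ} (hs : s ≤ t) (hv : v < n) : block t m v = s ↔ m s ≤ v ∧ v < m (s + 1) := by
  refine ⟨fun h => ?_, fun h => block_eq hm hs h.1 h.2⟩
  obtain ⟨s', hs', h1, h2⟩ := exists_block h0 hlast hv
  rw [← h, block_eq hm hs' h1 h2]
  exact ⟨h1, h2⟩

theorem sum_block_sizes (h0 : m 0 = 0) (hlast : m (t + 1) = n)
    (hm : StrictMonoOn m (Set.Iic (t + 1))) : ∑ c : Fin (t + 1), (m ((c : ℕ) + 1) - m c) = n := by
  have hle : ∀ s ∈ range (t + 1), m s ≤ m (s + 1) := fun s hs =>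
    hm.monotoneOn (Set.mem_Iic.mpr (Finset.mem_range.mp hs).le)
      (Set.mem_Iic.mpr (Finset.mem_range.mp hs)) (Nat.le_succ s)
  rw [Fin.sum_univ_eq_sum_range (fun s => m (s + 1) - m s), ← Nat.cast_inj (R := ℤ), Nat.cast_sum,
    Finset.sum_congr rfl fun s hs => Nat.cast_sub (hle s hs),
    Finset.sum_range_sub (fun s => (m s : ℤ)), hlast, h0, Nat.cast_zero, sub_zero]

theorem block_sub_one_eq_iff (h0 : m 0 = 0) (hlast : m (t + 1) = n)
    (hm : StrictMonoOn m (Set.Iic (t + 1))) {i : ℕ} (hi1 : 1 ≤ i) (hi : i < n) :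
    block t m (i - 1) = block t m i ↔ i ∉ (Icc 1 t).image m := by
  constructor
  · intro heq himage
    obtain ⟨s, hs, rfl⟩ := Finset.mem_image.mp himage
    obtain ⟨hs1, hst⟩ := Finset.mem_Icc.mp hs
    have hlt := hm (Set.mem_Iic.mpr (by omega)) (Set.mem_Iic.mpr (by omega))
      (show s - 1 < s by omega)
    have hlt' := hm (Set.mem_Iic.mpr (by omega)) (Set.mem_Iic.mpr (by omega))
      (show s < s + 1 by omega)
    rw [block_eq hm hst le_rfl hlt',
      block_eq hm (s := s - 1) (by omega) (by omega) (by rw [Nat.sub_add_cancel hs1]; omega)] at heq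
    omega
  · intro hnot
    have hs := Nat.lt_succ_iff.mp (block_lt hlast hi)
    obtain ⟨h1, h2⟩ := (block_eq_iff h0 hlast hm hs hi).mp rfl
    rcases h1.lt_or_eq with h | h
    · exact block_eq hm hs (by omega) (by omega)
    · have hs0 : block t m i ≠ 0 := fun hs0 => by rw [hs0, h0] at h; omega
      exact absurd (Finset.mem_image.mpr
        ⟨_, Finset.mem_Icc.mpr ⟨Nat.one_le_iff_ne_zero.mpr hs0, hs⟩, h⟩) hnot

end Blocks

section Permutations

variable {t n : ℕ} {m : ℕ → ℕ}

def BlockIncreasing (t : ℕ) (m : ℕ → ℕ) (σ : Equiv.Perm (Fin n)) : Prop :=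
  ∀ u v : Fin n, u < v → block t m u = block t m v → σ u < σ v

theorem BlockIncreasing.apply_lt_apply_iff {π : Equiv.Perm (Fin n)} (hπ : BlockIncreasing t m π⁻¹)
    {i j : Fin n} (h : block t m (π i) = block t m (π j)) : π i < π j ↔ i < j := by
  refine ⟨fun hij => by simpa using hπ _ _ hij h, fun hij => lt_of_not_ge fun hji => ?_⟩
  rcases hji.lt_or_eq with hlt | heq
  · exact (lt_asymm hij) (by simpa using hπ _ _ hlt h.symm)
  · exact hij.ne (π.injective heq.symm)

theorem sword_of_lt (σ : Equiv.Perm (Fin n)) {i : ℕ} (hi : i < n) :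
    sword n σ i = (σ ⟨i, hi⟩ : ℕ) + 1 :=
  dif_pos hi

theorem mem_sDes {σ : Equiv.Perm (Fin n)} {i : ℕ} :
    i ∈ sDes n σ ↔ i ∈ Ico 1 n ∧ sword n σ i < sword n σ (i - 1) :=
  Finset.mem_filter

theorem sword_lt_sword_succ (h0 : m 0 = 0) (hlast : m (t + 1) = n)
    (hm : StrictMonoOn m (Set.Iic (t + 1))) {σ : Equiv.Perm (Fin n)}
    (hsub : sDes n σ ⊆ (Icc 1 t).image m) {a : ℕ} (hn : a + 1 < n)
    (hblock : block t m a = block t m (a + 1)) : sword n σ a < sword n σ (a + 1) := by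
  have hnotin := (block_sub_one_eq_iff h0 hlast hm (Nat.le_add_left 1 a) hn).mp hblock
  have hnotdes : ¬ sword n σ (a + 1) < sword n σ a := fun hd =>
    hnotin (hsub (mem_sDes.mpr ⟨Finset.mem_Ico.mpr ⟨Nat.le_add_left 1 a, hn⟩, hd⟩))
  have hne : σ ⟨a, Nat.lt_of_succ_lt hn⟩ ≠ σ ⟨a + 1, hn⟩ := fun h => by
    simpa using σ.injective h
  rw [sword_of_lt σ hn, sword_of_lt σ (Nat.lt_of_succ_lt hn)] at hnotdes ⊢
  have := Fin.val_ne_of_ne hne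
  omega

theorem sDes_subset_image_iff (h0 : m 0 = 0) (hlast : m (t + 1) = n)
    (hm : StrictMonoOn m (Set.Iic (t + 1))) (σ : Equiv.Perm (Fin n)) :
    sDes n σ ⊆ (Icc 1 t).image m ↔ BlockIncreasing t m σ := by
  constructor
  · intro hsub u v huv hblock
    have huv' : (u : ℕ) < v := huv
    have hmono : StrictMonoOn (sword n σ) (Set.Icc (u : ℕ) v) :=
      strictMonoOn_of_lt_add_one Set.ordConnected_Icc fun a _ ha ha1 => by
        have := block_mono (t := t) (m := m) ha.1
        have := block_mono (t := t) (m := m) ha1.2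
        have := block_mono (t := t) (m := m) (Nat.le_add_right a 1)
        exact sword_lt_sword_succ h0 hlast hm hsub (lt_of_le_of_lt ha1.2 v.2) (by omega)
    have := hmono ⟨le_rfl, huv'.le⟩ ⟨huv'.le, le_rfl⟩ huv'
    rw [sword_of_lt σ u.2, sword_of_lt σ v.2] at this
    rw [Fin.lt_def]
    simpa using this
  · intro hinc i hi
    obtain ⟨hi', hdes⟩ := mem_sDes.mp hi
    obtain ⟨hi1, hin⟩ := Finset.mem_Ico.mp hi'
    by_contra hnot
    have h := hinc ⟨i - 1, by omega⟩ ⟨i, hin⟩ (Fin.mk_lt_mk.mpr (by omega))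
      ((block_sub_one_eq_iff h0 hlast hm hi1 hin).mpr hnot)
    rw [sword_of_lt σ hin, sword_of_lt σ (by omega)] at hdes
    rw [Fin.lt_def] at h
    omega

def blockWord (hlast : m (t + 1) = n) (π : Equiv.Perm (Fin n)) : Fin n → Fin (t + 1) :=
  fun i => ⟨block t m (π i), block_lt hlast (π i).2⟩

theorem letterCount_blockWord (h0 : m 0 = 0) (hlast : m (t + 1) = n)
    (hm : StrictMonoOn m (Set.Iic (t + 1))) (π : Equiv.Perm (Fin n)) :
    letterCount (blockWord hlast π) = fun c : Fin (t + 1) => m ((c : ℕ) + 1) - m c := by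
  funext c
  have hc : (c : ℕ) ≤ t := Nat.lt_succ_iff.mp c.2
  calc letterCount (blockWord hlast π) c = #{v : Fin n | block t m v = c} := by
        simp only [letterCount, blockWord, Fin.ext_iff]
        exact card_filter_comp_equiv π fun v => block t m v = c
    _ = #{v : Fin n | m c ≤ v ∧ v < m ((c : ℕ) + 1)} := by
        simp only [block_eq_iff h0 hlast hm hc (Fin.is_lt _)]
    _ = m ((c : ℕ) + 1) - m c := Fin.card_filter_le_val_lt
        (hlast ▸ hm.monotoneOn (Set.mem_Iic.mpr (by omega)) Set.self_mem_Iic (by omega))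

theorem sMaj_eq_wordMaj_blockWord (hlast : m (t + 1) = n) {π : Equiv.Perm (Fin n)}
    (hπ : BlockIncreasing t m π⁻¹) : sMaj n π = wordMaj (blockWord hlast π) := by
  unfold sMaj wordMaj wMaj
  rw [wDes_congr (v := wordInt (blockWord hlast π)) fun i hi1 hi => ?_]
  have hi' : i - 1 < n := by omega
  rw [sword_of_lt π hi, sword_of_lt π hi']
  simp only [wordInt, dif_pos hi, dif_pos hi', blockWord, add_lt_add_iff_right, Nat.cast_lt]
  constructor
  · intro h
    refine lt_of_le_of_ne (block_mono h.le) fun heq => ?_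
    have := (hπ.apply_lt_apply_iff heq).mp h
    rw [Fin.mk_lt_mk] at this
    omega
  · intro h
    exact lt_of_not_ge fun h' => (not_le.mpr h) (block_mono h')

theorem val_eq_add_rank_blockWord (h0 : m 0 = 0) (hlast : m (t + 1) = n)
    (hm : StrictMonoOn m (Set.Iic (t + 1))) {π : Equiv.Perm (Fin n)} (hπ : BlockIncreasing t m π⁻¹)
    (i : Fin n) : (π i : ℕ) = m (blockWord hlast π i) + rank (blockWord hlast π) i := by
  have hs : block t m (π i) ≤ t := Nat.lt_succ_iff.mp (block_lt hlast (π i).2)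
  have hspec := (block_eq_iff h0 hlast hm hs (π i).2).mp rfl
  have hrank :
      rank (blockWord hlast π) i = #{v : Fin n | m (block t m (π i)) ≤ v ∧ (v : ℕ) < π i} := by
    calc rank (blockWord hlast π) i
        = #{j | π j < π i ∧ block t m (π j) = block t m (π i)} := by
          simp only [rank, blockWord, Fin.ext_iff]
          congr 1
          ext j
          simp only [Finset.mem_filter, Finset.mem_univ, true_and]
          exact ⟨fun h => ⟨(hπ.apply_lt_apply_iff h.2).mpr h.1, h.2⟩,
            fun h => ⟨(hπ.apply_lt_apply_iff h.2).mp h.1, h.2⟩⟩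
      _ = #{v | v < π i ∧ block t m v = block t m (π i)} :=
          card_filter_comp_equiv π fun v => v < π i ∧ block t m v = block t m (π i)
      _ = _ := by
          congr 1
          ext v
          simp only [Finset.mem_filter, Finset.mem_univ, true_and, block_eq_iff h0 hlast hm hs v.2,
            Fin.lt_def]
          omega
  rw [hrank, Fin.card_filter_le_val_lt (π i).2.le]
  simp only [blockWord]
  omega

theorem exists_blockWord_eq (hlast : m (t + 1) = n) (hm : StrictMonoOn m (Set.Iic (t + 1)))
    {w : Fin n → Fin (t + 1)} (hw : letterCount w = fun c : Fin (t + 1) => m ((c : ℕ) + 1) - m c) :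
    ∃ π : Equiv.Perm (Fin n), BlockIncreasing t m π⁻¹ ∧ blockWord hlast π = w := by
  have hmono : ∀ {a b : ℕ}, a ≤ b → b ≤ t + 1 → m a ≤ m b := fun hab hb =>
    hm.monotoneOn (Set.mem_Iic.mpr (hab.trans hb)) (Set.mem_Iic.mpr hb) hab
  have hlt : ∀ i, m (w i) + rank w i < m ((w i : ℕ) + 1) := fun i => by
    have hr := rank_lt_letterCount w i
    rw [hw] at hr
    have := hmono (Nat.le_add_right (w i : ℕ) 1) (w i).2
    dsimp only at hr
    omega
  have hle : ∀ i, m ((w i : ℕ) + 1) ≤ n := fun i => hlast ▸ hmono (w i).2 le_rfl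
  let f : Fin n → Fin n := fun i => ⟨m (w i) + rank w i, (hlt i).trans_le (hle i)⟩
  have hblock : ∀ i, block t m (f i) = w i := fun i =>
    block_eq hm (Nat.lt_succ_iff.mp (w i).2) (Nat.le_add_right _ _) (hlt i)
  have hsame : ∀ {i j}, block t m (f i) = block t m (f j) → w i = w j := fun h =>
    Fin.ext (by rw [← hblock, ← hblock, h])
  have hinj : Function.Injective f := fun i j hij => by
    have hwij := hsame (congrArg (fun v : Fin n => block t m v) hij)
    have hr : rank w i = rank w j := by
      have := congrArg Fin.val hij
      simp only [f, hwij] at this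
      omega
    rcases lt_trichotomy i j with h | h | h
    · exact absurd hr (rank_lt_rank h hwij).ne
    · exact h
    · exact absurd hr (rank_lt_rank h hwij.symm).ne'
  let π := Equiv.ofBijective f (Finite.injective_iff_bijective.mp hinj)
  refine ⟨π, fun u v huv hb => ?_, funext fun i => Fin.ext (hblock i)⟩
  obtain ⟨i, rfl⟩ := π.surjective u
  obtain ⟨j, rfl⟩ := π.surjective v
  have hwij := hsame hb
  rw [Equiv.Perm.inv_def, Equiv.symm_apply_apply, Equiv.symm_apply_apply, ← rank_lt_rank_iff hwij]
  have := Fin.lt_def.mp huv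
  simp only [π, Equiv.ofBijective_apply, f, hwij] at this
  omega

theorem sum_filter_sDes_inv_subset {M : Type*} [AddCommMonoid M] (h0 : m 0 = 0)
    (hlast : m (t + 1) = n) (hm : StrictMonoOn m (Set.Iic (t + 1))) (g : ℕ → M) :
    ∑ π : Equiv.Perm (Fin n) with sDes n π⁻¹ ⊆ (Icc 1 t).image m, g (sMaj n π)
      = ∑ w ∈ wordsWithContent n (fun c : Fin (t + 1) => m ((c : ℕ) + 1) - m c), g (wordMaj w) := by
  have hmem : ∀ π : Equiv.Perm (Fin n),
      π ∈ (univ.filter fun π : Equiv.Perm (Fin n) => sDes n π⁻¹ ⊆ (Icc 1 t).image m)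
        ↔ BlockIncreasing t m π⁻¹ := fun π => by
    simp [sDes_subset_image_iff h0 hlast hm]
  refine Finset.sum_bij (fun π _ => blockWord hlast π)
    (fun π _ => mem_wordsWithContent.mpr (letterCount_blockWord h0 hlast hm π))
    (fun π hπ π' hπ' h => Equiv.ext fun i => Fin.ext ?_) (fun w hw => ?_)
    (fun π hπ => congrArg g (sMaj_eq_wordMaj_blockWord hlast ((hmem π).mp hπ)))
  · rw [val_eq_add_rank_blockWord h0 hlast hm ((hmem π).mp hπ) i,
      val_eq_add_rank_blockWord h0 hlast hm ((hmem π').mp hπ') i, h]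
  · obtain ⟨π, hπ, rfl⟩ := exists_blockWord_eq hlast hm (mem_wordsWithContent.mp hw)
    exact ⟨π, (hmem π).mpr hπ, rfl⟩

end Permutations

noncomputable section Statements

open Finset RatFunc

local notation "𝕢" => (RatFunc.X : RatFunc ℚ)

/-- Garsia–Gessel. -/
theorem stmt5 (n t : ℕ) (m : ℕ → ℕ) (h0 : m 0 = 0) (hlast : m (t + 1) = n)
    (hmono : ∀ s, s ≤ t → m s < m (s + 1)) :
    (∑ π : Equiv.Perm (Fin n),
        if sDes n π⁻¹ ⊆ (Finset.Icc 1 t).image m then 𝕢 ^ sMaj n π else 0) =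
      qFact 𝕢 n / ∏ s ∈ Finset.range (t + 1), qFact 𝕢 (m (s + 1) - m s) := by
  have hm : StrictMonoOn m (Set.Iic (t + 1)) :=
    strictMonoOn_Iic_of_lt_succ fun s hs => hmono s (Nat.lt_succ_iff.mp hs)
  rw [← Finset.sum_filter, sum_filter_sDes_inv_subset h0 hlast hm (𝕢 ^ ·),
    eq_div_iff (Finset.prod_ne_zero_iff.mpr fun s _ => qFact_X_ne_zero _),
    ← Fin.prod_univ_eq_prod_range (fun s => qFact 𝕢 (m (s + 1) - m s))]
  exact sum_wordMaj_mul_prod_qFact 𝕢 _ (sum_block_sizes h0 hlast hm)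

end Statements
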